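/- Let (α_n) be nonnegative increasing with ∑_n e^{-m₁ α_n} < ∞ for some m₁, and let β be a sequence with |β_{n-1}| ≤ C e^{m α_n} for some C, m. Suppose that for every p ∈ ℕ there exists q ∈ ℕ such that for every k ∈ ℕ there is L_{k,p} > 0 with |β^{*k}_{n-1}| ≤ L_{k,p} e^{q α_n} for all n. Then for every p ∈ ℕ there exist q' ∈ ℕ and, for each k, a constant M_{k,p} > 0 such that ‖Ť_β^k e_n‖_p ≤ M_{k,p} e^{q' α_n} for all n; i.e., the dual convolution operator Ť_β on Λ_∞(α) is topologizable. Conversely, topologizability of Ť_β implies the stated growth condition on the convolution powers β^{*k}. -/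

import Mathlib

/-!
Since `∑ e^{-m₁ α_n}` converges and `α` is increasing, `n e^{-m₁ α_n} ≤ ∑_{i ≤ n} e^{-m₁ α_i}`
is bounded, i.e. `n ≤ S e^{m₁ α_n}`. If `|β^{*k}_{n-1}| ≤ L e^{q α_n}`, each of the `n` terms of
`‖Ť_β^k e_n‖_p = ∑_{j ≤ n} |β^{*k}_{n-j}| e^{p α_j}` is at most `L e^{(p+q) α_n}`, so the sum is at
most `L S e^{(p+q+m₁) α_n}`. Conversely, the term `j = 1` alone bounds `|β^{*k}_{n-1}|`.
-/

/-- Convolution of two sequences: (a*b)_m = ∑_{i=0}^m a_i b_{m-i}. -/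
noncomputable def conv (a b : ℕ → ℂ) : ℕ → ℂ :=
  fun m => ∑ i ∈ Finset.range (m + 1), a i * b (m - i)

/-- k-fold convolution power of a sequence (k = 0 gives the unit δ). -/
noncomputable def convPow (a : ℕ → ℂ) : ℕ → (ℕ → ℂ)
  | 0 => fun m => if m = 0 then 1 else 0
  | k + 1 => conv a (convPow a k)

open Finset Real

namespace Monotone

variable {α : ℕ → ℝ}

lemma exp_mul_le_exp_mul (hα : Monotone α) {c : ℝ} (hc : 0 ≤ c) {i j : ℕ} (hij : i ≤ j) :
    exp (c * α i) ≤ exp (c * α j) :=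
  exp_le_exp.2 (mul_le_mul_of_nonneg_left (hα hij) hc)

lemma natCast_le_tsum_mul_exp (hα : Monotone α) {c : ℝ} (hc : 0 ≤ c)
    (hsum : Summable fun i : ℕ => exp (-c * α (i + 1))) (n : ℕ) :
    (n : ℝ) ≤ (∑' i : ℕ, exp (-c * α (i + 1))) * exp (c * α n) := by
  have hterm : ∀ i ∈ range n, exp (-c * α n) ≤ exp (-c * α (i + 1)) := fun i hi =>
    exp_le_exp.2 (mul_le_mul_of_nonpos_left (hα (mem_range.1 hi)) (neg_nonpos.2 hc))
  have hn : (n : ℝ) * exp (-c * α n) ≤ ∑' i : ℕ, exp (-c * α (i + 1)) :=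
    calc (n : ℝ) * exp (-c * α n) = #(range n) • exp (-c * α n) := by simp
      _ ≤ ∑ i ∈ range n, exp (-c * α (i + 1)) := card_nsmul_le_sum _ _ _ hterm
      _ ≤ ∑' i : ℕ, exp (-c * α (i + 1)) := hsum.sum_le_tsum _ fun i _ => (exp_pos _).le
  calc (n : ℝ) = (n : ℝ) * exp (-c * α n) * exp (c * α n) := by
        rw [mul_assoc, ← exp_add]; simp
    _ ≤ _ := mul_le_mul_of_nonneg_right hn (exp_pos _).le

lemma sum_mul_exp_le_of_le_exp (hα : Monotone α) {a : ℕ → ℝ} {L p q c : ℝ} (hL : 0 ≤ L)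
    (hp : 0 ≤ p) (hq : 0 ≤ q) (hc : 0 ≤ c)
    (hsum : Summable fun i : ℕ => exp (-c * α (i + 1)))
    (ha : ∀ n : ℕ, 1 ≤ n → a (n - 1) ≤ L * exp (q * α n)) (n : ℕ) :
    ∑ j ∈ Icc 1 n, a (n - j) * exp (p * α j)
      ≤ L * (∑' i : ℕ, exp (-c * α (i + 1))) * exp ((p + q + c) * α n) := by
  have hterm : ∀ j ∈ Icc 1 n, a (n - j) * exp (p * α j) ≤ L * exp ((q + p) * α n) := by
    intro j hj
    obtain ⟨hj1, hjn⟩ := mem_Icc.1 hj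
    have hshift : a (n - j) ≤ L * exp (q * α n) :=
      calc a (n - j) ≤ L * exp (q * α (n - j + 1)) := by
            simpa using ha (n - j + 1) (Nat.le_add_left 1 _)
        _ ≤ L * exp (q * α n) :=
            mul_le_mul_of_nonneg_left (hα.exp_mul_le_exp_mul hq (by omega)) hL
    calc a (n - j) * exp (p * α j) ≤ L * exp (q * α n) * exp (p * α n) :=
          mul_le_mul hshift (hα.exp_mul_le_exp_mul hp hjn) (exp_pos _).le (by positivity)
      _ = L * exp ((q + p) * α n) := by rw [mul_assoc, ← exp_add, add_mul]
  calc ∑ j ∈ Icc 1 n, a (n - j) * exp (p * α j)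
      ≤ #(Icc 1 n) • (L * exp ((q + p) * α n)) := sum_le_card_nsmul _ _ _ hterm
    _ = (n : ℝ) * (L * exp ((q + p) * α n)) := by simp
    _ ≤ ((∑' i : ℕ, exp (-c * α (i + 1))) * exp (c * α n)) * (L * exp ((q + p) * α n)) :=
        mul_le_mul_of_nonneg_right (hα.natCast_le_tsum_mul_exp hc hsum n) (by positivity)
    _ = _ := by rw [mul_mul_mul_comm, ← exp_add]; ring_nf

end Monotone

lemma le_mul_exp_of_sum_mul_exp_le {α a : ℕ → ℝ} (ha : ∀ i, 0 ≤ a i) {M p q : ℝ} {n : ℕ}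
    (hn : 1 ≤ n) (hbound : ∑ j ∈ Icc 1 n, a (n - j) * exp (p * α j) ≤ M * exp (q * α n)) :
    a (n - 1) ≤ M * exp (-p * α 1) * exp (q * α n) := by
  have hfirst : a (n - 1) * exp (p * α 1) ≤ ∑ j ∈ Icc 1 n, a (n - j) * exp (p * α j) :=
    single_le_sum (f := fun j => a (n - j) * exp (p * α j)) (fun j _ => mul_nonneg (ha _) (exp_pos _).le)
      (mem_Icc.2 ⟨le_rfl, hn⟩)
  calc a (n - 1) = a (n - 1) * exp (p * α 1) * exp (-p * α 1) := by
        rw [mul_assoc, ← exp_add]; simp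
    _ ≤ M * exp (q * α n) * exp (-p * α 1) :=
        mul_le_mul_of_nonneg_right (hfirst.trans hbound) (exp_pos _).le
    _ = M * exp (-p * α 1) * exp (q * α n) := by ring

theorem stmt_15_general (α : ℕ → ℝ) (hmono : Monotone α)
    (m₁ : ℕ) (hsum : Summable fun n : ℕ => Real.exp (-(m₁ : ℝ) * α (n + 1)))
    (β : ℕ → ℂ) :
    (∀ p : ℕ, ∃ q : ℕ, ∀ k : ℕ, 1 ≤ k → ∃ L : ℝ, 0 < L ∧
        ∀ n : ℕ, 1 ≤ n → ‖convPow β k (n - 1)‖ ≤ L * Real.exp ((q : ℝ) * α n))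
      ↔ (∀ p : ℕ, ∃ q' : ℕ, ∀ k : ℕ, 1 ≤ k → ∃ Mk : ℝ, 0 < Mk ∧
          ∀ n : ℕ, 1 ≤ n →
            ∑ j ∈ Finset.Icc 1 n, ‖convPow β k (n - j)‖ * Real.exp ((p : ℝ) * α j)
              ≤ Mk * Real.exp ((q' : ℝ) * α n)) := by
  have hS : 0 < ∑' i : ℕ, exp (-(m₁ : ℝ) * α (i + 1)) :=
    hsum.tsum_pos (fun i => (exp_pos _).le) 0 (exp_pos _)
  constructor
  · intro H p
    obtain ⟨q, hq⟩ := H p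
    refine ⟨p + q + m₁, fun k hk => ?_⟩
    obtain ⟨L, hL, hLbound⟩ := hq k hk
    refine ⟨_, mul_pos hL hS, fun n _ => ?_⟩
    push_cast
    exact hmono.sum_mul_exp_le_of_le_exp (a := fun i => ‖convPow β k i‖) hL.le p.cast_nonneg q.cast_nonneg m₁.cast_nonneg hsum
      hLbound n
  · intro H p
    obtain ⟨q', hq'⟩ := H p
    refine ⟨q', fun k hk => ?_⟩
    obtain ⟨M, hM, hMbound⟩ := hq' k hk
    exact ⟨_, by positivity, fun n hn =>
      le_mul_exp_of_sum_mul_exp_le (fun i => norm_nonneg _) hn (hMbound n hn)⟩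

/-- The dual convolution operator Ť_β on Λ_∞(α) is topologizable (checked on the
basis: Ť_β^k e_n = Ť_{β^{*k}} e_n = ∑_{j=1}^n β^{*k}_{n-j} e_j) iff for every p
there is q such that for every k there is L_{k,p} > 0 with
|β^{*k}_{n-1}| ≤ L_{k,p} e^{q α_n} for all n. -/
theorem stmt_15 (α : ℕ → ℝ) (hmono : Monotone α) (hnonneg : ∀ n, 0 ≤ α n)
    (m₁ : ℕ) (hsum : Summable fun n : ℕ => Real.exp (-(m₁ : ℝ) * α (n + 1)))
    (β : ℕ → ℂ) (m : ℕ) (C : ℝ) (hC : 0 < C)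
    (hβ : ∀ n : ℕ, 1 ≤ n → ‖β (n - 1)‖ ≤ C * Real.exp ((m : ℝ) * α n)) :
    (∀ p : ℕ, ∃ q : ℕ, ∀ k : ℕ, 1 ≤ k → ∃ L : ℝ, 0 < L ∧
        ∀ n : ℕ, 1 ≤ n → ‖convPow β k (n - 1)‖ ≤ L * Real.exp ((q : ℝ) * α n))
      ↔ (∀ p : ℕ, ∃ q' : ℕ, ∀ k : ℕ, 1 ≤ k → ∃ Mk : ℝ, 0 < Mk ∧
          ∀ n : ℕ, 1 ≤ n →
            ∑ j ∈ Finset.Icc 1 n, ‖convPow β k (n - j)‖ * Real.exp ((p : ℝ) * α j)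
              ≤ Mk * Real.exp ((q' : ℝ) * α n)) :=
  stmt_15_general α hmono m₁ hsum β
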